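/- Let ρ and ρ' be two routes from source n_s to node n_x. If L(ρ') > L(ρ) and C(ρ') > C(ρ) + 1, then ρ' cannot be a sub-route of a simplest near-fastest route from n_s to the target n_t; precisely, for every route σ from n_x to n_t such that the concatenation ρ'σ is a near-fastest route from n_s to n_t, the concatenation ρσ is also a near-fastest route from n_s to n_t and satisfies L(ρσ) < L(ρ'σ) and C(ρσ) < C(ρ'σ), so ρ'σ is not a simplest near-fastest route. -/

import Mathlib

/-- A road network: a directed graph on node type `V` together with a set of
roads `R`, a membership relation `onRoad`, a unique road `roadOf x y` for each
edge `(x, y)`, a positive length `len` on edges, and a turn-cost function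
`turn` with values in `[0,1]` that vanishes when staying on the same road. -/
structure RoadNetwork (V R : Type) where
  edge : V → V → Prop
  onRoad : V → R → Prop
  roadOf : V → V → R
  len : V → V → ℝ
  turn : V → R → R → ℝ
  onRoad_nonempty : ∀ n : V, ∃ r : R, onRoad n r
  len_pos : ∀ ⦃x y : V⦄, edge x y → 0 < len x y
  turn_nonneg : ∀ (n : V) (r₁ r₂ : R), onRoad n r₁ → onRoad n r₂ → 0 ≤ turn n r₁ r₂
  turn_le_one : ∀ (n : V) (r₁ r₂ : R), onRoad n r₁ → onRoad n r₂ → turn n r₁ r₂ ≤ 1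
  turn_self : ∀ (n : V) (r : R), turn n r r = 0
  edge_onRoad_left : ∀ ⦃x y : V⦄, edge x y → onRoad x (roadOf x y)
  edge_onRoad_right : ∀ ⦃x y : V⦄, edge x y → onRoad y (roadOf x y)

namespace RoadNetwork

variable {V R : Type}

/-- A route is a nonempty sequence of nodes every consecutive pair of which is an edge. -/
def IsRoute (N : RoadNetwork V R) (ρ : List V) : Prop :=
  ρ ≠ [] ∧ ρ.Chain' N.edge

/-- The length of a route: the sum of the lengths of its edges. -/
def routeLen (N : RoadNetwork V R) (ρ : List V) : ℝ :=
  ((ρ.zip ρ.tail).map fun p => N.len p.1 p.2).sum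

/-- The complexity of a route: the sum of the turn costs at its internal nodes. -/
def routeCpl (N : RoadNetwork V R) (ρ : List V) : ℝ :=
  ((ρ.zip (ρ.tail.zip ρ.tail.tail)).map fun p =>
    N.turn p.2.1 (N.roadOf p.1 p.2.1) (N.roadOf p.2.1 p.2.2)).sum

/-- A route from `a` to `b`. -/
def RouteFromTo (N : RoadNetwork V R) (ρ : List V) (a b : V) : Prop :=
  N.IsRoute ρ ∧ ρ.head? = some a ∧ ρ.getLast? = some b

/-- Edges of the expanded graph: from `(n_x, r_i)` to `(n_y, r_j)` whenever
`r_i, r_j ∈ R(n_x)` and `(n_x, n_y)` is an edge lying on road `r_j`. -/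
def expEdge (N : RoadNetwork V R) (a b : V × R) : Prop :=
  N.onRoad a.1 a.2 ∧ N.onRoad a.1 b.2 ∧ N.edge a.1 b.1 ∧ N.roadOf a.1 b.1 = b.2

/-- An expanded route: a nonempty path in the expanded graph. -/
def IsExpRoute (N : RoadNetwork V R) (σ : List (V × R)) : Prop :=
  σ ≠ [] ∧ σ.Chain' N.expEdge ∧ ∀ a ∈ σ, N.onRoad a.1 a.2

/-- The length of an expanded route: the sum of the lengths of its edges. -/
def expLen (N : RoadNetwork V R) (σ : List (V × R)) : ℝ :=
  ((σ.zip σ.tail).map fun p => N.len p.1.1 p.2.1).sum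

/-- The complexity of an expanded route: the sum of the turn costs
`C(n_x, r_i, r_j)` over its edges `((n_x, r_i), (n_y, r_j))`. -/
def expCpl (N : RoadNetwork V R) (σ : List (V × R)) : ℝ :=
  ((σ.zip σ.tail).map fun p => N.turn p.1.1 p.1.2 p.2.2).sum

/-- An expanded route from `a` to `b`. -/
def ExpRouteFromTo (N : RoadNetwork V R) (σ : List (V × R)) (a b : V × R) : Prop :=
  N.IsExpRoute σ ∧ σ.head? = some a ∧ σ.getLast? = some b

/-- `σ ∈ E(ρ)`: the expanded routes associated with route `ρ`; the `k`-th
expanded node (for `k > 1`) is `(n_k, R(n_{k-1}, n_k))`, while the first is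
`(n_1, r)` for an arbitrary road `r ∈ R(n_1)`. -/
def InExpansion (N : RoadNetwork V R) (ρ : List V) (σ : List (V × R)) : Prop :=
  σ.map Prod.fst = ρ ∧ (∀ a ∈ σ, N.onRoad a.1 a.2) ∧
  ∀ (k : ℕ) (h : k + 1 < σ.length),
    (σ.get ⟨k + 1, h⟩).2 =
      N.roadOf (σ.get ⟨k, Nat.lt_of_succ_lt h⟩).1 (σ.get ⟨k + 1, h⟩).1

/-- The special expanded route `ρ_E* ∈ E(ρ)`: its first expanded node is
`(n_1, R(n_1, n_2))`. -/
def IsSpecialExpansion (N : RoadNetwork V R) (ρ : List V) (σ : List (V × R)) : Prop :=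
  N.InExpansion ρ σ ∧
  ∀ (h : 1 < σ.length),
    (σ.get ⟨0, Nat.lt_of_succ_lt h⟩).2 =
      N.roadOf (σ.get ⟨0, Nat.lt_of_succ_lt h⟩).1 (σ.get ⟨1, h⟩).1

end RoadNetwork

/-- `(c₁, l₁) <_FS (c₂, l₂)`: FS-shorter, i.e. lower complexity, or equal
complexity and smaller length. -/
def FSshorter (c₁ l₁ c₂ l₂ : ℝ) : Prop := c₁ < c₂ ∨ (c₁ = c₂ ∧ l₁ < l₂)

/-- A near-fastest route from `a` to `b` (with respect to the fastest-route
lengths `sfL` towards the target): a route of length at most `(1 + ε) * sfL a`. -/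
def NearFastest {V R : Type} (N : RoadNetwork V R) (ε : ℝ) (sfL : V → ℝ)
    (ρ : List V) (a b : V) : Prop :=
  N.RouteFromTo ρ a b ∧ N.routeLen ρ ≤ (1 + ε) * sfL a

/-- A simplest near-fastest route from `a` to `b`: a near-fastest route of
minimum complexity among all near-fastest routes from `a` to `b`. -/
def SimplestNearFastest {V R : Type} (N : RoadNetwork V R) (ε : ℝ) (sfL : V → ℝ)
    (ρ : List V) (a b : V) : Prop :=
  NearFastest N ε sfL ρ a b ∧
  ∀ ρ' : List V, NearFastest N ε sfL ρ' a b → N.routeCpl ρ ≤ N.routeCpl ρ'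

namespace RoadNetwork

variable {V R : Type} (N : RoadNetwork V R)

@[simp]
lemma routeLen_singleton (a : V) : N.routeLen [a] = 0 := rfl

@[simp]
lemma routeLen_cons_cons (a b : V) (l : List V) :
    N.routeLen (a :: b :: l) = N.len a b + N.routeLen (b :: l) := by
  simp [routeLen]

@[simp]
lemma routeCpl_singleton (a : V) : N.routeCpl [a] = 0 := rfl

@[simp]
lemma routeCpl_pair (a b : V) : N.routeCpl [a, b] = 0 := rfl

@[simp]
lemma routeCpl_cons_cons_cons (a b c : V) (l : List V) :
    N.routeCpl (a :: b :: c :: l) =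
      N.turn b (N.roadOf a b) (N.roadOf b c) + N.routeCpl (b :: c :: l) := by
  simp [routeCpl]

variable {N}

lemma turn_mem_Icc_of_edge {a b c : V} (hab : N.edge a b) (hbc : N.edge b c) :
    N.turn b (N.roadOf a b) (N.roadOf b c) ∈ Set.Icc 0 1 :=
  ⟨N.turn_nonneg _ _ _ (N.edge_onRoad_right hab) (N.edge_onRoad_left hbc),
    N.turn_le_one _ _ _ (N.edge_onRoad_right hab) (N.edge_onRoad_left hbc)⟩

lemma routeLen_append {x : V} :
    ∀ {ρ : List V}, ρ.getLast? = some x →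
      ∀ s : List V, N.routeLen (ρ ++ s) = N.routeLen ρ + N.routeLen (x :: s)
  | [], h, _ => by simp at h
  | [a], h, s => by
      obtain rfl : a = x := by simpa using h
      simp
  | a :: b :: l, h, s => by
      have ih := routeLen_append (ρ := b :: l) (by simpa using h) s
      simp only [List.cons_append, routeLen_cons_cons] at ih ⊢
      rw [ih, add_assoc]

lemma routeCpl_append_bounds {x : V} :
    ∀ {ρ s : List V}, ρ.getLast? = some x → (ρ ++ s).IsChain N.edge →
      N.routeCpl ρ + N.routeCpl (x :: s) ≤ N.routeCpl (ρ ++ s) ∧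
      N.routeCpl (ρ ++ s) ≤ N.routeCpl ρ + N.routeCpl (x :: s) + 1
  | [], _, h, _ => by simp at h
  | [a], s, h, _ => by
      obtain rfl : a = x := by simpa using h
      simp
  | [a, b], [], h, _ => by simp
  | [a, b], y :: s, h, hchain => by
      obtain rfl : b = x := by simpa using h
      simp only [List.cons_append, List.nil_append, List.isChain_cons_cons] at hchain
      obtain ⟨hab, hby, -⟩ := hchain
      obtain ⟨h0, h1⟩ := turn_mem_Icc_of_edge hab hby
      simp only [List.cons_append, List.nil_append, routeCpl_cons_cons_cons, routeCpl_pair]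
      constructor <;> linarith
  | a :: b :: c :: l, s, h, hchain => by
      have ih := routeCpl_append_bounds (ρ := b :: c :: l) (s := s) (by simpa using h)
        (List.isChain_cons_cons.1 hchain).2
      simp only [List.cons_append, routeCpl_cons_cons_cons] at ih ⊢
      constructor <;> linarith [ih.1, ih.2]

lemma RouteFromTo.append {ρ s : List V} {a x b : V} (hρ : N.RouteFromTo ρ a x)
    (hσ : N.RouteFromTo (x :: s) x b) : N.RouteFromTo (ρ ++ s) a b := by
  obtain ⟨⟨hρne, hρchain⟩, hρhead, hρlast⟩ := hρ
  obtain ⟨⟨-, hσchain⟩, -, hσlast⟩ := hσ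
  obtain ⟨hjoin, hschain⟩ := List.isChain_cons.1 hσchain
  refine ⟨⟨by simp [hρne], List.isChain_append.2 ⟨hρchain, hschain, ?_⟩⟩, ?_, ?_⟩
  · simpa [hρlast] using hjoin
  · simp [List.head?_append, hρhead]
  · rw [List.getLast?_cons] at hσlast
    cases hs : s.getLast? <;> simp_all [List.getLast?_append]

end RoadNetwork

theorem prune_by_dominance_general {V R : Type}
    (N : RoadNetwork V R) (ns nx nt : V) (ε : ℝ) (sfL : V → ℝ)
    (ρ ρ' : List V)
    (hρ : N.RouteFromTo ρ ns nx) (hρ' : N.RouteFromTo ρ' ns nx)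
    (hL : N.routeLen ρ' > N.routeLen ρ)
    (hC : N.routeCpl ρ' > N.routeCpl ρ + 1) :
    ∀ σ : List V, N.RouteFromTo σ nx nt →
      NearFastest N ε sfL (ρ' ++ σ.tail) ns nt →
      NearFastest N ε sfL (ρ ++ σ.tail) ns nt ∧
      N.routeLen (ρ ++ σ.tail) < N.routeLen (ρ' ++ σ.tail) ∧
      N.routeCpl (ρ ++ σ.tail) < N.routeCpl (ρ' ++ σ.tail) ∧
      ¬ SimplestNearFastest N ε sfL (ρ' ++ σ.tail) ns nt := by
  intro σ hσ hNF'
  obtain ⟨t, rfl⟩ := List.head?_eq_some_iff.1 hσ.2.1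
  simp only [List.tail_cons] at hNF' ⊢
  have hcpl_le := (N.routeCpl_append_bounds hρ.2.2 (hρ.append hσ).1.2).2
  have hcpl_ge := (N.routeCpl_append_bounds hρ'.2.2 hNF'.1.1.2).1
  have hcpl : N.routeCpl (ρ ++ t) < N.routeCpl (ρ' ++ t) := by linarith
  have hlen : N.routeLen (ρ ++ t) < N.routeLen (ρ' ++ t) := by
    rw [N.routeLen_append hρ.2.2, N.routeLen_append hρ'.2.2]
    linarith
  have hNF : NearFastest N ε sfL (ρ ++ t) ns nt := ⟨hρ.append hσ, hlen.le.trans hNF'.2⟩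
  exact ⟨hNF, hlen, hcpl, fun hsimplest => (hsimplest.2 _ hNF).not_gt hcpl⟩

/-- **Lemma 7 (dominance pruning).** Let `ρ`, `ρ'` be routes from `n_s` to
`n_x` with `L(ρ') > L(ρ)` and `C(ρ') > C(ρ) + 1`. Then `ρ'` cannot be a
sub-route of a simplest near-fastest route from `n_s` to `n_t`: for every route
`σ` from `n_x` to `n_t` such that `ρ'σ` is near-fastest, the route `ρσ` is
also near-fastest with `L(ρσ) < L(ρ'σ)` and `C(ρσ) < C(ρ'σ)`, so `ρ'σ` is not
a simplest near-fastest route. -/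
theorem prune_by_dominance {V R : Type} [Fintype V] [Fintype R]
    (N : RoadNetwork V R) (ns nx nt : V) (ε : ℝ) (hε : 0 ≤ ε) (sfL : V → ℝ)
    (ρ ρ' : List V)
    (hρ : N.RouteFromTo ρ ns nx) (hρ' : N.RouteFromTo ρ' ns nx)
    (hL : N.routeLen ρ' > N.routeLen ρ)
    (hC : N.routeCpl ρ' > N.routeCpl ρ + 1) :
    ∀ σ : List V, N.RouteFromTo σ nx nt →
      NearFastest N ε sfL (ρ' ++ σ.tail) ns nt →
      NearFastest N ε sfL (ρ ++ σ.tail) ns nt ∧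
      N.routeLen (ρ ++ σ.tail) < N.routeLen (ρ' ++ σ.tail) ∧
      N.routeCpl (ρ ++ σ.tail) < N.routeCpl (ρ' ++ σ.tail) ∧
      ¬ SimplestNearFastest N ε sfL (ρ' ++ σ.tail) ns nt :=
  prune_by_dominance_general N ns nx nt ε sfL ρ ρ' hρ hρ' hL hC
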